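/- Let K/F be a finite Galois extension with group G = Gal(K/F), let F carry an iterative derivation δ_F that extends uniquely to an iterative derivation δ_K on K, and suppose every element of G commutes with each δ_K^(n). Let f : G × G → K^× be a 2-cocycle taking values in the constants K^δ, and let B = ⊕_{σ∈G} K u_σ be the corresponding crossed product algebra with u_σ u_τ = f(σ,τ) u_{στ} and u_σ k = σ(k) u_σ. Then the maps δ_B^(n)(Σ_σ k_σ u_σ) = Σ_σ δ_K^(n)(k_σ) u_σ define an iterative derivation on B extending δ_K. -/

import Mathlib

/-!
Since `B` is free over `K` on the `u_σ`, applying `δ_K^(n)` to coefficients is well defined and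
additive, and iterativity holds coefficientwise. For the Leibniz rule, the coefficient of `u_ρ`
in a product is `∑_σ c_σ σ(e_{σ⁻¹ρ}) f(σ, σ⁻¹ρ)`: the cocycle values are constants, so they pass
through `δ_K^(n)`, and `σ` commutes with `δ_K^(n)`, so the Leibniz rule of `δ_K` applied to
`c_σ σ(e_{σ⁻¹ρ})` gives the Leibniz rule in `B`.
-/

/-- An iterative derivation on a unital ring `R`: a sequence of additive maps
`d n : R → R` with `d 0 = id`, the Leibniz rule
`d n (a*b) = ∑_{i+j=n} d i a * d j b`, and iterativity
`d n ∘ d m = (m+n choose n) • d (m+n)`. -/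
structure IterDeriv (R : Type*) [Ring R] where
  d : ℕ → R → R
  map_add : ∀ n a b, d n (a + b) = d n a + d n b
  map_id : ∀ a, d 0 a = a
  leibniz : ∀ n a b, d n (a * b) = ∑ ij ∈ Finset.HasAntidiagonal.antidiagonal n, d ij.1 a * d ij.2 b
  iter : ∀ m n a, d n (d m a) = (m + n).choose n • d (m + n) a

open Finset

namespace IterDeriv

variable {R : Type*} [Ring R] (D : IterDeriv R)

def toAddMonoidHom (n : ℕ) : R →+ R := AddMonoidHom.mk' (D.d n) (D.map_add n)

theorem map_zero (n : ℕ) : D.d n 0 = 0 := (D.toAddMonoidHom n).map_zero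

theorem map_sum {ι : Type*} (n : ℕ) (s : Finset ι) (g : ι → R) :
    D.d n (∑ i ∈ s, g i) = ∑ i ∈ s, D.d n (g i) :=
  _root_.map_sum (D.toAddMonoidHom n) g s

def IsConstant (c : R) : Prop := ∀ n ≥ 1, D.d n c = 0

theorem map_mul_of_isConstant {c : R} (hc : D.IsConstant c) (n : ℕ) (x : R) :
    D.d n (x * c) = D.d n x * c := by
  cases n with
  | zero => simp only [D.map_id]
  | succ n =>
    rw [D.leibniz, Nat.sum_antidiagonal_succ',
      D.map_id, sum_eq_zero fun p _ => by rw [hc _ (Nat.le_add_left 1 _), mul_zero],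
      add_zero]

end IterDeriv

namespace CrossedProduct

variable {G K B : Type*} [Fintype G] [Ring K] [Ring B]

@[simps]
def combination (j : K →+* B) (u : G → B) : (G → K) →+ B where
  toFun c := ∑ σ, j (c σ) * u σ
  map_zero' := by simp
  map_add' c e := by simp only [Pi.add_apply, map_add, add_mul, sum_add_distrib]

variable {j : K →+* B} {u : G → B} (hbij : Function.Bijective (combination j u))

noncomputable def coeffDeriv (D : IterDeriv K) (n : ℕ) : B →+ B :=
  (combination j u).comp (((D.toAddMonoidHom n).compLeft G).comp
    (AddEquiv.ofBijective (combination j u) hbij).symm.toAddMonoidHom)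

theorem coeffDeriv_combination (D : IterDeriv K) (n : ℕ) (c : G → K) :
    coeffDeriv hbij D n (combination j u c) = combination j u (D.d n ∘ c) := by
  have hsymm : (AddEquiv.ofBijective _ hbij).symm (combination j u c) = c :=
    (AddEquiv.ofBijective _ hbij).symm_apply_apply c
  simp only [coeffDeriv, AddMonoidHom.comp_apply, AddEquiv.coe_toAddMonoidHom, hsymm]
  rfl

variable [Group G]

theorem combination_single [DecidableEq G] (hone : u 1 = 1) (k : K) :
    combination j u (Pi.single 1 k) = j k := by
  rw [combination_apply, Fintype.sum_eq_single 1 fun σ hσ => by simp [hσ]]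
  simp [hone]

theorem coeffDeriv_map (D : IterDeriv K) (hone : u 1 = 1) (n : ℕ) (k : K) :
    coeffDeriv hbij D n (j k) = j (D.d n k) := by
  classical
  rw [← combination_single (j := j) hone, coeffDeriv_combination,
    ← combination_single (j := j) hone]
  exact congrArg _ (funext (Pi.apply_single (fun _ => D.d n) (fun _ => D.map_zero n) 1 k))

variable [MulSemiringAction G K]

def mulCoeffs (f : G → G → K) (c e : G → K) (ρ : G) : K :=
  ∑ σ, c σ * σ • e (σ⁻¹ * ρ) * f σ (σ⁻¹ * ρ)

theorem combination_mul_combination {f : G → G → K}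
    (humul : ∀ σ τ, u σ * u τ = j (f σ τ) * u (σ * τ))
    (huk : ∀ σ k, u σ * j k = j (σ • k) * u σ) (c e : G → K) :
    combination j u c * combination j u e = combination j u (mulCoeffs f c e) := by
  have hterm : ∀ σ τ, j (c σ) * u σ * (j (e τ) * u τ) =
      j (c σ * σ • e τ * f σ τ) * u (σ * τ) := fun σ τ => by
    calc j (c σ) * u σ * (j (e τ) * u τ)
        = j (c σ) * (u σ * j (e τ)) * u τ := by simp only [mul_assoc]
      _ = j (c σ) * j (σ • e τ) * (u σ * u τ) := by rw [huk]; simp only [mul_assoc]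
      _ = j (c σ * σ • e τ * f σ τ) * u (σ * τ) := by rw [humul]; simp only [map_mul, mul_assoc]
  have hreindex : ∀ σ, ∑ τ, j (c σ * σ • e τ * f σ τ) * u (σ * τ) =
      ∑ ρ, j (c σ * σ • e (σ⁻¹ * ρ) * f σ (σ⁻¹ * ρ)) * u ρ := fun σ =>
    Fintype.sum_equiv (Equiv.mulLeft σ) _ _ fun τ => by simp
  simp only [combination_apply, sum_mul_sum, hterm, hreindex]
  simp only [mulCoeffs, map_sum, sum_mul]
  exact sum_comm

theorem _root_.IterDeriv.comp_mulCoeffs (D : IterDeriv K)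
    (hcomm : ∀ (σ : G) n x, D.d n (σ • x) = σ • D.d n x) {f : G → G → K}
    (hf : ∀ σ τ, D.IsConstant (f σ τ)) (n : ℕ) (c e : G → K) :
    D.d n ∘ mulCoeffs f c e =
      ∑ ij ∈ antidiagonal n, mulCoeffs f (D.d ij.1 ∘ c) (D.d ij.2 ∘ e) := by
  funext ρ
  simp only [Function.comp_apply, Finset.sum_apply, mulCoeffs, D.map_sum,
    D.map_mul_of_isConstant (hf _ _), D.leibniz, hcomm, sum_mul]
  exact sum_comm

variable {f : G → G → K} (D : IterDeriv K)
    (hcomm : ∀ (σ : G) n x, D.d n (σ • x) = σ • D.d n x) (hf : ∀ σ τ, D.IsConstant (f σ τ))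
    (humul : ∀ σ τ, u σ * u τ = j (f σ τ) * u (σ * τ))
    (huk : ∀ σ k, u σ * j k = j (σ • k) * u σ)

noncomputable def iterDeriv : IterDeriv B where
  d n := coeffDeriv hbij D n
  map_add n := (coeffDeriv hbij D n).map_add
  map_id b := by
    obtain ⟨c, rfl⟩ := hbij.2 b
    rw [coeffDeriv_combination]
    exact congrArg _ (funext fun σ => D.map_id (c σ))
  leibniz n a b := by
    obtain ⟨c, rfl⟩ := hbij.2 a
    obtain ⟨e, rfl⟩ := hbij.2 b
    simp only [coeffDeriv_combination, combination_mul_combination humul huk,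
      D.comp_mulCoeffs hcomm hf, map_sum]
  iter m n b := by
    obtain ⟨c, rfl⟩ := hbij.2 b
    have hiter : D.d n ∘ D.d m ∘ c = (m + n).choose n • (D.d (m + n) ∘ c) :=
      funext fun σ => D.iter m n (c σ)
    simp only [coeffDeriv_combination, hiter, map_nsmul]

end CrossedProduct

theorem crossed_product_iterDeriv_general
    (F K : Type*) [Field F] [Field K] [Algebra F K] [Fintype (K ≃ₐ[F] K)]
    (DK : IterDeriv K)
    -- every element of the Galois group commutes with `δ_K`
    (hcomm : ∀ (σ : K ≃ₐ[F] K) (n : ℕ) (x : K), DK.d n (σ x) = σ (DK.d n x))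
    (f : (K ≃ₐ[F] K) → (K ≃ₐ[F] K) → Kˣ)
    -- `f` takes values in the constants of `δ_K`
    (hfconst : ∀ σ τ : K ≃ₐ[F] K, ∀ n ≥ 1, DK.d n ((f σ τ : K)) = 0)
    -- the crossed product algebra `B`
    (B : Type*) [Ring B] (j : K →+* B) (u : (K ≃ₐ[F] K) → B)
    (hone : u 1 = 1)
    (humul : ∀ σ τ : K ≃ₐ[F] K, u σ * u τ = j (f σ τ : K) * u (σ * τ))
    (huk : ∀ (σ : K ≃ₐ[F] K) (k : K), u σ * j k = j (σ k) * u σ)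
    -- `B = ⊕_σ K u_σ`: every element has a unique coefficient expansion
    (hbasis : ∀ b : B, ∃! c : (K ≃ₐ[F] K) → K, b = ∑ σ, j (c σ) * u σ) :
    ∃ E : IterDeriv B,
      (∀ (n : ℕ) (c : (K ≃ₐ[F] K) → K),
        E.d n (∑ σ, j (c σ) * u σ) = ∑ σ, j (DK.d n (c σ)) * u σ) ∧
      (∀ (n : ℕ) (k : K), E.d n (j k) = j (DK.d n k)) := by
  have hbij : Function.Bijective (CrossedProduct.combination j u) :=
    Function.bijective_iff_existsUnique _ |>.2 fun b => by
      simpa only [CrossedProduct.combination_apply, eq_comm] using hbasis b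
  exact ⟨CrossedProduct.iterDeriv hbij DK hcomm hfconst humul huk,
    CrossedProduct.coeffDeriv_combination hbij DK, CrossedProduct.coeffDeriv_map hbij DK hone⟩

/-- Let `K/F` be a finite Galois extension with group `G`, `δ_K` an iterative
derivation on `K` whose components preserve `F` and commute with every element
of `G`, and `f` a `2`-cocycle on `G` with values in the constants of `δ_K`.
If `B = ⊕_σ K·u_σ` is the corresponding crossed product algebra, then applying
`δ_K` coefficientwise gives an iterative derivation on `B` extending `δ_K`. -/
theorem crossed_product_iterDeriv
    (F K : Type*) [Field F] [Field K] [Algebra F K] [FiniteDimensional F K]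
    [IsGalois F K] [Fintype (K ≃ₐ[F] K)]
    (DK : IterDeriv K)
    -- the components of `δ_K` map `F` into `F`
    (hFstable : ∀ (n : ℕ) (x : F), ∃ y : F,
      DK.d n (algebraMap F K x) = algebraMap F K y)
    -- every element of the Galois group commutes with `δ_K`
    (hcomm : ∀ (σ : K ≃ₐ[F] K) (n : ℕ) (x : K), DK.d n (σ x) = σ (DK.d n x))
    (f : (K ≃ₐ[F] K) → (K ≃ₐ[F] K) → Kˣ)
    -- `f` is a `2`-cocycle
    (hcocycle : ∀ σ τ ρ : K ≃ₐ[F] K,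
      σ (f τ ρ : K) * (f σ (τ * ρ) : K) = (f σ τ : K) * (f (σ * τ) ρ : K))
    -- `f` takes values in the constants of `δ_K`
    (hfconst : ∀ σ τ : K ≃ₐ[F] K, ∀ n ≥ 1, DK.d n ((f σ τ : K)) = 0)
    -- the crossed product algebra `B`
    (B : Type*) [Ring B] (j : K →+* B) (u : (K ≃ₐ[F] K) → B)
    (hone : u 1 = 1)
    (humul : ∀ σ τ : K ≃ₐ[F] K, u σ * u τ = j (f σ τ : K) * u (σ * τ))
    (huk : ∀ (σ : K ≃ₐ[F] K) (k : K), u σ * j k = j (σ k) * u σ)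
    -- `B = ⊕_σ K u_σ`: every element has a unique coefficient expansion
    (hbasis : ∀ b : B, ∃! c : (K ≃ₐ[F] K) → K, b = ∑ σ, j (c σ) * u σ) :
    ∃ E : IterDeriv B,
      (∀ (n : ℕ) (c : (K ≃ₐ[F] K) → K),
        E.d n (∑ σ, j (c σ) * u σ) = ∑ σ, j (DK.d n (c σ)) * u σ) ∧
      (∀ (n : ℕ) (k : K), E.d n (j k) = j (DK.d n k)) :=
  crossed_product_iterDeriv_general F K DK hcomm f hfconst B j u hone humul huk hbasis
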